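/- For every n ∈ ℙ, ∑_{γ ∈ Δ_n, Dmaj(γ) even} (-1)^{ℓ_B(γ)} q^{Dmaj(γ)} = ∑_{γ ∈ D_n, Dmaj(γ) even} (-1)^{ℓ_D(γ)} q^{Dmaj(γ)}, and ∑_{γ ∈ Δ_n, Dmaj(γ) odd} (-1)^{ℓ_B(γ)} q^{Dmaj(γ)} = -∑_{γ ∈ D_n, Dmaj(γ) odd} (-1)^{ℓ_D(γ)} q^{Dmaj(γ)}, where D_n is identified with Δ_n via γ ↦ [γ(1),...,γ(n-1),|γ(n)|] and Dmaj on D_n is defined through this bijection. -/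

import Mathlib

/-!
Only the parities of `ℓ_B` and `ℓ_D` enter. Every Coxeter generator takes the value `-1` under
the characters `β ↦ sign |β| · (-1)^{N₁(β)}` of `B_n` and `γ ↦ sign |γ|` of `D_n`, and the
generators generate, so these characters are `(-1)^{ℓ_B}` and `(-1)^{ℓ_D}`. The map
`γ ↦ |γ|_n` is a bijection `D_n → Δ_n` preserving `Dmaj` (the last sign of `γ` is recovered from
the parity of `N₁`), and `Dmaj γ = 2·maj + N₁(|γ|_n)`; hence the `B_n`-sign of `|γ|_n` is
`(-1)^{Dmaj γ}` times the `D_n`-sign of `γ`.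
-/

open Finset Polynomial

/-- The hyperoctahedral group `B n`, modeled as pairs (permutation, sign vector):
the signed permutation with window `β(i) = ±(σ(i)+1)`. -/
abbrev Bgrp (n : ℕ) := Equiv.Perm (Fin n) × (Fin n → Bool)

/-- The window entry `β(i)` (a nonzero integer). -/
def wdw {n : ℕ} (β : Bgrp n) (i : Fin n) : ℤ :=
  (if β.2 i then -1 else 1) * ((β.1 i : ℤ) + 1)

/-- Window entry at a `ℕ` position (0-based), `0` out of range. -/
def wdwN {n : ℕ} (β : Bgrp n) (i : ℕ) : ℤ :=
  if h : i < n then wdw β ⟨i, h⟩ else 0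

/-- Number of inversions of the window. -/
def invB {n : ℕ} (β : Bgrp n) : ℕ :=
  ((univ : Finset (Fin n × Fin n)).filter
    (fun p => p.1 < p.2 ∧ wdw β p.2 < wdw β p.1)).card

/-- The set of positions with negative entries. -/
def NegB {n : ℕ} (β : Bgrp n) : Finset (Fin n) :=
  univ.filter (fun i => wdw β i < 0)

def N1 {n : ℕ} (β : Bgrp n) : ℕ := (NegB β).card

def N2 {n : ℕ} (β : Bgrp n) : ℕ :=
  ((univ : Finset (Fin n × Fin n)).filter
    (fun p => p.1 < p.2 ∧ wdw β p.1 + wdw β p.2 < 0)).card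

/-- The order `-1 ≺ -2 ≺ ⋯ ≺ -n ≺ 1 ≺ 2 ≺ ⋯ ≺ n` on nonzero integers. -/
def precLt (a b : ℤ) : Prop :=
  (a < 0 ∧ b < 0 ∧ b < a) ∨ (a < 0 ∧ 0 < b) ∨ (0 < a ∧ 0 < b ∧ a < b)

instance (a b : ℤ) : Decidable (precLt a b) := by unfold precLt; infer_instance

/-- Descent set of the window, with respect to `≺` (0-based positions). -/
def DesB {n : ℕ} (β : Bgrp n) : Finset ℕ :=
  (range (n-1)).filter (fun i => precLt (wdwN β (i+1)) (wdwN β i))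

/-- Major index: sum of the (1-based) descent positions. -/
def majB {n : ℕ} (β : Bgrp n) : ℕ := ∑ i ∈ DesB β, (i+1)

/-- Flag-major index. -/
def fmaj {n : ℕ} (β : Bgrp n) : ℕ := 2 * majB β + N1 β

/-- Group multiplication (composition of signed permutations). -/
def bmul {n : ℕ} (β γ : Bgrp n) : Bgrp n :=
  (β.1 * γ.1, fun i => xor (γ.2 i) (β.2 (γ.1 i)))

/-- The identity signed permutation. -/
def bone (n : ℕ) : Bgrp n := (1, fun _ => false)

/-- The Coxeter generators `s_0, s_1, …, s_{n-1}` of `B n`. -/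
def BGens (n : ℕ) : Set (Bgrp n) :=
  { b | (∃ h : 0 < n, b = ((1 : Equiv.Perm (Fin n)), fun j => decide (j = (⟨0, h⟩ : Fin n)))) ∨
        (∃ (i : ℕ) (h : i + 1 < n),
          b = (Equiv.swap ⟨i, Nat.lt_of_succ_lt h⟩ ⟨i+1, h⟩, fun _ => false)) }

/-- Minimal length of an expression of `β` as a product of the generators of `B n`. -/
noncomputable def lenB {n : ℕ} (β : Bgrp n) : ℕ :=
  sInf {k | ∃ l : List (Bgrp n), l.length = k ∧ (∀ g ∈ l, g ∈ BGens n) ∧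
    l.foldr bmul (bone n) = β}

/-- The Coxeter generators `s_0^D, s_1, …, s_{n-1}` of `D n`. -/
def DGens (n : ℕ) : Set (Bgrp n) :=
  { b | (∃ h : 1 < n,
          b = (Equiv.swap ⟨0, Nat.lt_of_succ_lt h⟩ ⟨1, h⟩, fun (j : Fin n) => decide ((j : ℕ) < 2))) ∨
        (∃ (i : ℕ) (h : i + 1 < n),
          b = (Equiv.swap ⟨i, Nat.lt_of_succ_lt h⟩ ⟨i+1, h⟩, fun _ => false)) }

/-- Minimal length of an expression as a product of the generators of `D n`. -/
noncomputable def lenD {n : ℕ} (β : Bgrp n) : ℕ :=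
  sInf {k | ∃ l : List (Bgrp n), l.length = k ∧ (∀ g ∈ l, g ∈ DGens n) ∧
    l.foldr bmul (bone n) = β}

/-- The even-signed permutation group `D n` as a finset of `B n`. -/
def Dgrp (n : ℕ) : Finset (Bgrp n) := univ.filter (fun γ => Even (N1 γ))

/-- `Δ_n = {γ ∈ B_n : γ(n) > 0}`. -/
def DeltaSet (n : ℕ) : Finset (Bgrp n) := univ.filter (fun γ => 0 < wdwN γ (n-1))

/-- `|γ|_n`: replace the last window entry by its absolute value. -/
def absLast {n : ℕ} (γ : Bgrp n) : Bgrp n :=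
  (γ.1, fun i => if (i : ℕ) = n - 1 then false else γ.2 i)

/-- The `D`-major index. -/
def Dmaj {n : ℕ} (γ : Bgrp n) : ℕ := fmaj (absLast γ)

/-- `-β`: negate all window entries. -/
def negB {n : ℕ} (β : Bgrp n) : Bgrp n := (β.1, fun i => !β.2 i)

/-- Number of inversions of a permutation of `Fin n`. -/
def invS {n : ℕ} (σ : Equiv.Perm (Fin n)) : ℕ :=
  ((univ : Finset (Fin n × Fin n)).filter
    (fun p => p.1 < p.2 ∧ σ p.2 < σ p.1)).card

/-- Major index of a permutation of `Fin n` (usual order). -/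
def majS {n : ℕ} (σ : Equiv.Perm (Fin n)) : ℕ :=
  ∑ i ∈ (range (n-1)).filter
      (fun i => ∀ h : i + 1 < n, σ ⟨i+1, h⟩ < σ ⟨i, Nat.lt_of_succ_lt h⟩), (i+1)

/-- The `q`-analogue `[m]_q = 1 + q + ⋯ + q^{m-1}`, evaluated at a polynomial `q`. -/
noncomputable def qpoly (m : ℕ) (q : Polynomial ℤ) : Polynomial ℤ := ∑ k ∈ range m, q ^ k

section Windows

variable {n : ℕ}

lemma wdw_neg_iff (β : Bgrp n) (i : Fin n) : wdw β i < 0 ↔ β.2 i = true := by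
  have : (0 : ℤ) < (β.1 i : ℤ) + 1 := by positivity
  cases h : β.2 i <;> simp [wdw, h] <;> omega

lemma zero_lt_wdw_iff (β : Bgrp n) (i : Fin n) : 0 < wdw β i ↔ β.2 i = false := by
  cases h : β.2 i <;> simp [wdw, h]

lemma N1_eq_card (β : Bgrp n) : N1 β = ({i | β.2 i} : Finset (Fin n)).card := by
  simp only [N1, NegB, wdw_neg_iff]

lemma N1_eq_sum_toNat (β : Bgrp n) : N1 β = ∑ i, (β.2 i).toNat := by
  rw [N1_eq_card, Finset.card_filter]
  exact Finset.sum_congr rfl fun i _ => by cases β.2 i <;> rfl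

end Windows

section Words

variable {n : ℕ}

lemma bmul_assoc (a b c : Bgrp n) : bmul (bmul a b) c = bmul a (bmul b c) := by
  simp only [bmul, mul_assoc, Equiv.Perm.mul_apply, Bool.xor_assoc]

lemma bone_bmul (β : Bgrp n) : bmul (bone n) β = β := by
  simp [bmul, bone]

lemma bmul_bone (β : Bgrp n) : bmul β (bone n) = β := by
  simp [bmul, bone]

def IsProdOf (S : Set (Bgrp n)) (β : Bgrp n) : Prop :=
  ∃ l : List (Bgrp n), (∀ g ∈ l, g ∈ S) ∧ l.foldr bmul (bone n) = β

namespace IsProdOf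

variable {S : Set (Bgrp n)}

lemma one : IsProdOf S (bone n) := ⟨[], by simp, rfl⟩

lemma of_mem {g : Bgrp n} (hg : g ∈ S) : IsProdOf S g :=
  ⟨[g], by simpa using hg, bmul_bone g⟩

lemma bmul {β γ : Bgrp n} (hβ : IsProdOf S β) (hγ : IsProdOf S γ) :
    IsProdOf S (bmul β γ) := by
  obtain ⟨l, hl, rfl⟩ := hβ
  obtain ⟨l', hl', rfl⟩ := hγ
  refine ⟨l ++ l', fun g hg => (List.mem_append.1 hg).elim (hl g) (hl' g), ?_⟩
  induction l with
  | nil => simp [bone_bmul]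
  | cons g l ih => simp [ih fun g hg => hl g (by simp [hg]), bmul_assoc]

end IsProdOf

noncomputable def wordLen (S : Set (Bgrp n)) (β : Bgrp n) : ℕ :=
  sInf {k | ∃ l : List (Bgrp n), l.length = k ∧ (∀ g ∈ l, g ∈ S) ∧ l.foldr bmul (bone n) = β}

/-- Minimality of the length plays no role: every word for `β` has a length of parity `χ β`. -/
lemma neg_one_pow_wordLen {S : Set (Bgrp n)} {χ : Bgrp n → ℤˣ}
    (hχ : ∀ β γ, χ (bmul β γ) = χ β * χ γ) (hS : ∀ g ∈ S, χ g = -1)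
    {β : Bgrp n} (hβ : IsProdOf S β) : (-1) ^ wordLen S β = χ β := by
  have hone : χ (bone n) = 1 := mul_eq_left.1 (by rw [← hχ, bone_bmul])
  have hword : ∀ l : List (Bgrp n), (∀ g ∈ l, g ∈ S) →
      χ (l.foldr bmul (bone n)) = (-1) ^ l.length := by
    intro l hl
    induction l with
    | nil => exact hone
    | cons g l ih =>
      rw [List.foldr_cons, hχ, hS g (hl g (by simp)), ih fun g hg => hl g (by simp [hg]),
        List.length_cons, pow_succ']
  obtain ⟨l, hl, rfl⟩ := hβ
  obtain ⟨l', hlen, hl', hfold⟩ := Nat.sInf_mem (⟨l.length, l, rfl, hl, rfl⟩ :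
    {k | ∃ l' : List (Bgrp n), l'.length = k ∧ (∀ g ∈ l', g ∈ S) ∧
      l'.foldr bmul (bone n) = l.foldr bmul (bone n)}.Nonempty)
  rw [wordLen, ← hlen, ← hword l' hl', hfold]

end Words

section Generation

variable {n : ℕ}

def ofPerm (σ : Equiv.Perm (Fin n)) : Bgrp n := (σ, fun _ => false)

def flips (s : Finset (Fin n)) : Bgrp n := (1, fun i => decide (i ∈ s))

lemma ofPerm_bmul_flips (β : Bgrp n) : bmul (ofPerm β.1) (flips {i | β.2 i}) = β := by
  simp [bmul, ofPerm, flips]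

lemma bmul_ofPerm (σ τ : Equiv.Perm (Fin n)) : bmul (ofPerm σ) (ofPerm τ) = ofPerm (σ * τ) := by
  simp [bmul, ofPerm]

lemma flips_empty : flips ∅ = bone n := by
  simp [flips, bone]

lemma bmul_flips_of_disjoint {s t : Finset (Fin n)} (h : Disjoint s t) :
    bmul (flips s) (flips t) = flips (s ∪ t) := by
  simp only [bmul, flips, mul_one, Equiv.Perm.one_apply, Prod.mk.injEq, true_and]
  funext i
  by_cases hs : i ∈ s
  · simp [hs, Finset.disjoint_left.1 h hs]
  · simp [hs]

lemma conj_flips (σ : Equiv.Perm (Fin n)) (s : Finset (Fin n)) :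
    bmul (bmul (ofPerm σ) (flips s)) (ofPerm σ⁻¹) = flips (s.map σ.toEmbedding) := by
  simp [bmul, ofPerm, flips, Finset.mem_map_equiv]

def ContainsAdjSwaps (S : Set (Bgrp n)) : Prop :=
  ∀ (i : ℕ) (h : i + 1 < n), ofPerm (Equiv.swap ⟨i, Nat.lt_of_succ_lt h⟩ ⟨i + 1, h⟩) ∈ S

lemma containsAdjSwaps_BGens : ContainsAdjSwaps (BGens n) :=
  fun i h => Or.inr ⟨i, h, rfl⟩

lemma containsAdjSwaps_DGens : ContainsAdjSwaps (DGens n) :=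
  fun i h => Or.inr ⟨i, h, rfl⟩

namespace IsProdOf

variable {S : Set (Bgrp n)}

lemma ofPerm (hS : ContainsAdjSwaps S) (σ : Equiv.Perm (Fin n)) : IsProdOf S (ofPerm σ) := by
  cases n with
  | zero => simpa [Subsingleton.elim σ 1, _root_.ofPerm, bone] using (one : IsProdOf S (bone 0))
  | succ m =>
    have hσ : σ ∈ Submonoid.closure (Set.range fun i : Fin m => Equiv.swap i.castSucc i.succ) := by
      rw [Equiv.Perm.mclosure_swap_castSucc_succ]; trivial
    induction hσ using Submonoid.closure_induction with
    | mem _ h =>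
      obtain ⟨i, rfl⟩ := h
      exact of_mem (hS i (Nat.succ_lt_succ i.2))
    | one => exact one
    | mul σ τ _ _ hσ hτ => exact bmul_ofPerm σ τ ▸ hσ.bmul hτ

lemma flips_map (hS : ContainsAdjSwaps S) {s : Finset (Fin n)} (h : IsProdOf S (flips s))
    (σ : Equiv.Perm (Fin n)) : IsProdOf S (flips (s.map σ.toEmbedding)) :=
  conj_flips σ s ▸ ((ofPerm hS σ).bmul h).bmul (ofPerm hS σ⁻¹)

lemma of_flips (hS : ContainsAdjSwaps S) {β : Bgrp n} (h : IsProdOf S (flips {i | β.2 i})) :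
    IsProdOf S β :=
  ofPerm_bmul_flips β ▸ (ofPerm hS β.1).bmul h

end IsProdOf

lemma isProdOf_BGens_flips_singleton (i : Fin n) : IsProdOf (BGens n) (flips {i}) := by
  have hz : IsProdOf (BGens n) (flips {⟨0, i.pos⟩}) :=
    .of_mem (Or.inl ⟨i.pos, by simp [flips]⟩)
  simpa using hz.flips_map containsAdjSwaps_BGens (Equiv.swap ⟨0, i.pos⟩ i)

lemma isProdOf_BGens (β : Bgrp n) : IsProdOf (BGens n) β := by
  refine .of_flips containsAdjSwaps_BGens ?_
  induction ({i | β.2 i} : Finset (Fin n)) using Finset.induction_on with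
  | empty => exact flips_empty ▸ .one
  | insert a s ha ih =>
    rw [Finset.insert_eq, ← bmul_flips_of_disjoint (Finset.disjoint_singleton_left.2 ha)]
    exact (isProdOf_BGens_flips_singleton a).bmul ih

lemma isProdOf_DGens_flips_zero_one (h : 1 < n) :
    IsProdOf (DGens n) (flips {⟨0, Nat.lt_of_succ_lt h⟩, ⟨1, h⟩}) := by
  have hprod : bmul (ofPerm (Equiv.swap ⟨0, Nat.lt_of_succ_lt h⟩ ⟨1, h⟩))
      (Equiv.swap ⟨0, Nat.lt_of_succ_lt h⟩ ⟨1, h⟩, fun j => decide ((j : ℕ) < 2)) =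
      flips {⟨0, Nat.lt_of_succ_lt h⟩, ⟨1, h⟩} := by
    simp only [bmul, ofPerm, flips, Equiv.swap_mul_self, Bool.xor_false, Prod.mk.injEq, true_and]
    funext j
    simp only [Finset.mem_insert, Finset.mem_singleton, Fin.ext_iff]
    grind
  exact hprod ▸ (IsProdOf.of_mem (containsAdjSwaps_DGens 0 h)).bmul (.of_mem (Or.inl ⟨h, rfl⟩))

lemma exists_perm_apply_zero_one (h : 1 < n) {i j : Fin n} (hij : i ≠ j) :
    ∃ σ : Equiv.Perm (Fin n), σ ⟨0, Nat.lt_of_succ_lt h⟩ = i ∧ σ ⟨1, h⟩ = j := by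
  set z₀ : Fin n := ⟨0, Nat.lt_of_succ_lt h⟩
  set z₁ : Fin n := ⟨1, h⟩
  have hz : z₀ ≠ z₁ := by simp [z₀, z₁, Fin.ext_iff]
  have hj : Equiv.swap z₀ i j ≠ z₀ := by
    rw [Ne, Equiv.swap_apply_eq_iff, Equiv.swap_apply_left]; exact hij.symm
  refine ⟨Equiv.swap z₀ i * Equiv.swap z₁ (Equiv.swap z₀ i j), ?_, ?_⟩
  · simp [Equiv.swap_apply_of_ne_of_ne hz hj.symm]
  · simp

lemma isProdOf_DGens_flips_pair {i j : Fin n} (hij : i ≠ j) :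
    IsProdOf (DGens n) (flips {i, j}) := by
  have h : 1 < n := by
    by_contra! h
    exact hij (Fin.ext (by omega))
  obtain ⟨σ, hσ₀, hσ₁⟩ := exists_perm_apply_zero_one h hij
  simpa [hσ₀, hσ₁] using
    (isProdOf_DGens_flips_zero_one h).flips_map containsAdjSwaps_DGens σ

lemma isProdOf_DGens_flips {s : Finset (Fin n)} (hs : Even s.card) :
    IsProdOf (DGens n) (flips s) := by
  induction s using Finset.strongInduction with
  | H s ih =>
    rcases s.eq_empty_or_nonempty with rfl | ⟨i, hi⟩
    · exact flips_empty ▸ .one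
    obtain ⟨j, hj⟩ : (s.erase i).Nonempty := by
      rw [← Finset.card_pos, Finset.card_erase_of_mem hi]
      have := Finset.card_pos.2 ⟨i, hi⟩
      rcases hs with ⟨k, hk⟩
      omega
    have hji : j ≠ i := Finset.ne_of_mem_erase hj
    set t := (s.erase i).erase j
    have hst : s = {i, j} ∪ t := by
      rw [Finset.insert_union, Finset.singleton_union, Finset.insert_erase hj,
        Finset.insert_erase hi]
    have hdisj : Disjoint {i, j} t := by
      simp [t, Finset.disjoint_insert_left]
    have hcard : s.card = t.card + 2 := by
      rw [hst, Finset.card_union_of_disjoint hdisj, Finset.card_pair hji.symm, add_comm]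
    rw [hst, ← bmul_flips_of_disjoint hdisj]
    refine (isProdOf_DGens_flips_pair hji.symm).bmul (ih t ?_ ?_)
    · exact (Finset.erase_subset j _).trans_ssubset (Finset.erase_ssubset hi)
    · exact (Nat.even_add.1 (hcard ▸ hs)).2 even_two

lemma isProdOf_DGens {β : Bgrp n} (hβ : Even (N1 β)) : IsProdOf (DGens n) β :=
  .of_flips containsAdjSwaps_DGens (isProdOf_DGens_flips (N1_eq_card β ▸ hβ))

end Generation

section Signs

variable {n : ℕ}

def signB (β : Bgrp n) : ℤˣ := Equiv.Perm.sign β.1 * ∏ i, (-1) ^ (β.2 i).toNat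

lemma signB_eq (β : Bgrp n) : signB β = Equiv.Perm.sign β.1 * (-1) ^ N1 β := by
  rw [signB, Finset.prod_pow_eq_pow_sum, N1_eq_sum_toNat]

lemma signB_bmul (β γ : Bgrp n) : signB (bmul β γ) = signB β * signB γ := by
  have hxor : ∀ a b : Bool, (-1 : ℤˣ) ^ (xor a b).toNat = (-1) ^ a.toNat * (-1) ^ b.toNat := by
    intro a b; cases a <;> cases b <;> simp
  simp only [signB, bmul, map_mul, hxor, Finset.prod_mul_distrib,
    Equiv.prod_comp γ.1 fun i => (-1 : ℤˣ) ^ (β.2 i).toNat]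
  ac_rfl

lemma signB_of_mem_BGens {g : Bgrp n} (hg : g ∈ BGens n) : signB g = -1 := by
  rcases hg with ⟨h, rfl⟩ | ⟨i, h, rfl⟩
  · rw [signB, Fintype.prod_eq_single ⟨0, h⟩ fun j hj => by simp [hj]]
    simp
  · simp [signB, Fin.ext_iff]

lemma sign_of_mem_DGens {g : Bgrp n} (hg : g ∈ DGens n) : Equiv.Perm.sign g.1 = -1 := by
  rcases hg with ⟨h, rfl⟩ | ⟨i, h, rfl⟩ <;> simp [Fin.ext_iff]

lemma neg_one_pow_lenB (β : Bgrp n) :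
    (-1 : ℤˣ) ^ lenB β = Equiv.Perm.sign β.1 * (-1) ^ N1 β :=
  signB_eq β ▸ neg_one_pow_wordLen signB_bmul (fun _ => signB_of_mem_BGens) (isProdOf_BGens β)

lemma neg_one_pow_lenD {β : Bgrp n} (hβ : Even (N1 β)) :
    (-1 : ℤˣ) ^ lenD β = Equiv.Perm.sign β.1 :=
  neg_one_pow_wordLen (χ := fun β => Equiv.Perm.sign β.1) (fun β γ => map_mul _ β.1 γ.1)
    (fun _ => sign_of_mem_DGens) (isProdOf_DGens hβ)

end Signs

section DeltaD

lemma absLast_absLast {n : ℕ} (γ : Bgrp n) : absLast (absLast γ) = absLast γ := by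
  simp only [absLast, Prod.mk.injEq, true_and]
  funext i
  split_ifs <;> rfl

lemma Dmaj_absLast {n : ℕ} (γ : Bgrp n) : Dmaj (absLast γ) = Dmaj γ := by
  rw [Dmaj, Dmaj, absLast_absLast]

lemma neg_one_pow_Dmaj {n : ℕ} (γ : Bgrp n) : (-1 : ℤˣ) ^ Dmaj γ = (-1) ^ N1 (absLast γ) := by
  rw [Dmaj, fmaj, pow_add, pow_mul, neg_one_sq, one_pow, one_mul]

lemma neg_one_pow_lenB_absLast {R : Type*} [Ring R] {n : ℕ} {γ : Bgrp n} (hγ : Even (N1 γ)) :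
    (-1 : R) ^ lenB (absLast γ) = (-1) ^ Dmaj γ * (-1) ^ lenD γ := by
  have h : (-1 : ℤˣ) ^ lenB (absLast γ) = (-1) ^ Dmaj γ * (-1) ^ lenD γ := by
    rw [neg_one_pow_lenB, neg_one_pow_lenD hγ, neg_one_pow_Dmaj, mul_comm]
    rfl
  simpa using congrArg (fun u : ℤˣ => ((u : ℤ) : R)) h

variable {m : ℕ}

lemma absLast_eq_update (γ : Bgrp (m + 1)) :
    absLast γ = (γ.1, Function.update γ.2 (Fin.last m) false) := by
  simp only [absLast, Prod.mk.injEq, true_and]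
  funext i
  simp [Function.update_apply, Fin.ext_iff]

lemma mem_DeltaSet_iff {δ : Bgrp (m + 1)} : δ ∈ DeltaSet (m + 1) ↔ δ.2 (Fin.last m) = false := by
  have hw : wdwN δ (m + 1 - 1) = wdw δ (Fin.last m) := by simp [wdwN, Fin.last]
  rw [DeltaSet, Finset.mem_filter, hw, zero_lt_wdw_iff]
  simp

lemma N1_update_last (β : Bgrp (m + 1)) (b : Bool) :
    N1 (β.1, Function.update β.2 (Fin.last m) b) + (β.2 (Fin.last m)).toNat = N1 β + b.toNat := by
  simp only [N1_eq_sum_toNat, Fin.sum_univ_castSucc, Function.update_self,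
    Function.update_of_ne (Fin.castSucc_ne_last _)]
  ring

def liftD (δ : Bgrp (m + 1)) : Bgrp (m + 1) :=
  (δ.1, Function.update δ.2 (Fin.last m) (decide (Odd (N1 δ))))

lemma even_N1_liftD {δ : Bgrp (m + 1)} (hδ : δ.2 (Fin.last m) = false) : Even (N1 (liftD δ)) := by
  have h := N1_update_last δ (decide (Odd (N1 δ)))
  rw [hδ] at h
  rcases Nat.even_or_odd (N1 δ) with he | ho
  · simp only [liftD, Nat.not_odd_iff_even.2 he, decide_false, Bool.toNat_false, add_zero] at h ⊢
    exact h ▸ he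
  · simp only [liftD, ho, decide_true, Bool.toNat_true, Bool.toNat_false, add_zero] at h ⊢
    exact h ▸ ho.add_one

lemma absLast_liftD {δ : Bgrp (m + 1)} (hδ : δ.2 (Fin.last m) = false) : absLast (liftD δ) = δ := by
  rw [absLast_eq_update, liftD, Function.update_idem, ← hδ, Function.update_eq_self]

lemma liftD_absLast {γ : Bgrp (m + 1)} (hγ : Even (N1 γ)) : liftD (absLast γ) = γ := by
  have h := N1_update_last γ false
  rw [← absLast_eq_update] at h
  suffices decide (Odd (N1 (absLast γ))) = γ.2 (Fin.last m) by
    rw [liftD, this, absLast_eq_update, Function.update_idem, Function.update_eq_self]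
  cases hl : γ.2 (Fin.last m)
  · simp only [hl, Bool.toNat_false, add_zero] at h
    simpa [h] using hγ
  · simp only [hl, Bool.toNat_true, Bool.toNat_false, add_zero] at h
    simpa [← h, Nat.even_add_one] using hγ

lemma absLast_mem_DeltaSet (γ : Bgrp (m + 1)) : absLast γ ∈ DeltaSet (m + 1) := by
  simp [mem_DeltaSet_iff, absLast_eq_update]

lemma sum_DeltaSet_eq_sum_Dgrp (p : ℕ → Prop) [DecidablePred p] :
    ∑ δ ∈ (DeltaSet (m + 1)).filter (fun δ => p (Dmaj δ)), (-1 : ℤ[X]) ^ lenB δ * X ^ Dmaj δ =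
      ∑ γ ∈ (Dgrp (m + 1)).filter (fun γ => p (Dmaj γ)),
        (-1) ^ Dmaj γ * (-1) ^ lenD γ * X ^ Dmaj γ := by
  symm
  refine Finset.sum_nbij' absLast liftD ?_ ?_ ?_ ?_ ?_ <;> intro γ hγ <;>
    simp only [Finset.mem_filter, Dgrp, Finset.mem_univ, true_and] at hγ
  · simpa [Dmaj_absLast, hγ.2] using absLast_mem_DeltaSet γ
  · have hl := mem_DeltaSet_iff.1 hγ.1
    refine Finset.mem_filter.2 ⟨by simpa [Dgrp] using even_N1_liftD hl, ?_⟩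
    rw [← Dmaj_absLast, absLast_liftD hl]
    exact hγ.2
  · exact liftD_absLast hγ.1
  · exact absLast_liftD (mem_DeltaSet_iff.1 hγ.1)
  · rw [Dmaj_absLast, neg_one_pow_lenB_absLast hγ.1]

end DeltaD

/-- The even parts of the signed `Dmaj` generating functions over `Δ_n` (with `ℓ_B`)
and over `D_n` (with `ℓ_D`) agree; the odd parts are negatives of each other. -/
theorem stmt18 (n : ℕ) (hn : 0 < n) :
    (∑ γ ∈ (DeltaSet n).filter (fun γ => Even (Dmaj γ)),
        (-1 : Polynomial ℤ) ^ lenB γ * X ^ Dmaj γ =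
      ∑ γ ∈ (Dgrp n).filter (fun γ => Even (Dmaj γ)),
        (-1 : Polynomial ℤ) ^ lenD γ * X ^ Dmaj γ) ∧
    (∑ γ ∈ (DeltaSet n).filter (fun γ => Odd (Dmaj γ)),
        (-1 : Polynomial ℤ) ^ lenB γ * X ^ Dmaj γ =
      -∑ γ ∈ (Dgrp n).filter (fun γ => Odd (Dmaj γ)),
        (-1 : Polynomial ℤ) ^ lenD γ * X ^ Dmaj γ) := by
  obtain ⟨m, rfl⟩ : ∃ m, n = m + 1 := ⟨n - 1, by omega⟩
  rw [sum_DeltaSet_eq_sum_Dgrp, sum_DeltaSet_eq_sum_Dgrp, ← Finset.sum_neg_distrib]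
  constructor <;> refine Finset.sum_congr rfl fun γ hγ => ?_
  · rw [(Finset.mem_filter.1 hγ).2.neg_one_pow, one_mul]
  · rw [(Finset.mem_filter.1 hγ).2.neg_one_pow, neg_one_mul, neg_mul]
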